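/- arXiv:1705.09298 — 5 statements merged into one kernel-verified Lean document; each statement's English description precedes it below -/
import Mathlib

section
/- Let L₂ be a positive natural number and N a positive natural number. On the space of functions ψ : ((ZMod L₁) × (ZMod L₂))^N → ℂ (for any positive natural number L₁), define the translation operator (T₂ψ)(x) = ψ(x₁ − e₂, …, x_N − e₂), where e₂ = (0, 1), and the large gauge transformation (twist) operator (U₂ψ)(x) = exp((2πi/L₂)·Σ_{j=1}^{N} val((x_j)₂))·ψ(x), where val : ZMod L₂ → ℕ is the canonical representative in {0, …, L₂ − 1}. Then T₂ ∘ U₂ = exp(−2πi·N/L₂) · (U₂ ∘ T₂). -/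
/-- Translation of all `N` particles by `e₂ = (0,1)` on the discrete torus
`(ZMod L₁) × (ZMod L₂)`: `(T₂ψ)(x) = ψ(x₁ − e₂, …, x_N − e₂)`. -/
def torusT2 (L₁ L₂ N : ℕ) (ψ : (Fin N → ZMod L₁ × ZMod L₂) → ℂ) :
    (Fin N → ZMod L₁ × ZMod L₂) → ℂ :=
  fun x => ψ (fun j => x j - (0, 1))

/-- The fundamental large gauge transformation (LSM twist operator) along the 2-direction:
`(U₂ψ)(x) = exp((2πi/L₂)·Σ_j val((x_j)₂))·ψ(x)`. -/
noncomputable def torusU2 (L₁ L₂ N : ℕ) (ψ : (Fin N → ZMod L₁ × ZMod L₂) → ℂ) :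
    (Fin N → ZMod L₁ × ZMod L₂) → ℂ :=
  fun x => Complex.exp ((2 * Real.pi * Complex.I / (L₂ : ℂ)) *
    (∑ j, (((x j).2.val : ℕ) : ℂ))) * ψ x

lemma twist_aux (L₂ : ℕ) (hL₂ : 0 < L₂) (z : ZMod L₂) :
    Complex.exp ((2 * Real.pi * Complex.I / (L₂ : ℂ)) * (((z - 1).val : ℂ) + 1)) =
      Complex.exp ((2 * Real.pi * Complex.I / (L₂ : ℂ)) * ((z.val : ℂ))) := by
  haveI : NeZero L₂ := ⟨hL₂.ne'⟩
  have hd : (L₂ : ℤ) ∣ (((z - 1).val : ℤ) - (z.val : ℤ) + 1) := by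
    have : ((((z - 1).val : ℤ) - (z.val : ℤ) + 1 : ℤ) : ZMod L₂) = 0 := by
      push_cast [ZMod.natCast_val, ZMod.cast_id]
      ring
    exact (ZMod.intCast_zmod_eq_zero_iff_dvd _ _).mp this
  obtain ⟨k, hk⟩ := hd
  have hL : (L₂ : ℂ) ≠ 0 := by exact_mod_cast hL₂.ne'
  have hc : (((z - 1).val : ℂ) + 1) = (z.val : ℂ) + (k : ℂ) * (L₂ : ℂ) := by
    have := congrArg (fun n : ℤ => (n : ℂ)) hk
    push_cast at this
    linear_combination this
  rw [hc, mul_add, Complex.exp_add]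
  have : (2 * Real.pi * Complex.I / (L₂ : ℂ)) * ((k : ℂ) * (L₂ : ℂ))
      = (k : ℂ) * (2 * Real.pi * Complex.I) := by
    field_simp
  rw [this, Complex.exp_int_mul_two_pi_mul_I, mul_one]

/-- Commutation of translation and twist:
`T₂ ∘ U₂ = exp(−2πi·N/L₂) · (U₂ ∘ T₂)`. -/
theorem translation_twist_commutation (L₁ L₂ N : ℕ) (hL₁ : 0 < L₁) (hL₂ : 0 < L₂)
    (hN : 0 < N) :
    torusT2 L₁ L₂ N ∘ torusU2 L₁ L₂ N =
      Complex.exp (-(2 * Real.pi * Complex.I * (N : ℂ) / (L₂ : ℂ))) •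
        (torusU2 L₁ L₂ N ∘ torusT2 L₁ L₂ N) := by
  funext ψ x
  set c : ℂ := 2 * Real.pi * Complex.I / (L₂ : ℂ) with hc
  simp only [Function.comp, torusT2, torusU2, Pi.smul_apply, smul_eq_mul]
  have hsnd : ∀ j, (x j - ((0 : ZMod L₁), (1 : ZMod L₂))).2 = (x j).2 - 1 := fun j => rfl
  simp only [hsnd]
  rw [← mul_assoc]
  congr 1
  have key : Complex.exp (c * (∑ j, ((((x j).2 - 1).val : ℂ) + 1)))
      = Complex.exp (c * ∑ j, (((x j).2.val : ℂ))) := by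
    rw [Finset.mul_sum, Finset.mul_sum, Complex.exp_sum, Complex.exp_sum]
    exact Finset.prod_congr rfl fun j _ => twist_aux L₂ hL₂ ((x j).2)
  have hsum : (∑ j : Fin N, ((((x j).2 - 1).val : ℂ) + 1))
      = (∑ j : Fin N, ((((x j).2 - 1).val : ℂ))) + (N : ℂ) := by
    rw [Finset.sum_add_distrib]
    simp
  rw [hsum, mul_add, Complex.exp_add] at key
  have hneg : -(2 * Real.pi * Complex.I * (N : ℂ) / (L₂ : ℂ)) = -(c * (N : ℂ)) := by
    rw [hc]; ring
  rw [hneg, ← key, ← Complex.exp_add, ← Complex.exp_add]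
  congr 1
  ring
end

section
/- Let H be a complex inner product space, T a unitary operator on H, U a unitary operator on H, F a linear operator on H, θ a real number, and λ a complex number. Suppose that T ∘ U = exp(iθ) · (U ∘ T), that T ∘ F = F ∘ T, and that ψ ∈ H satisfies Tψ = λψ with ψ ≠ 0. If exp(iθ) ≠ 1, then ⟪ψ, U⁻¹(Fψ)⟫ = 0, i.e. the state U⁻¹Fψ is orthogonal to ψ. -/
/-! Undoing the flux insertion by `U` shifts the `T`-eigenvalue `λ` of `ψ` to `exp(-iθ) λ`, because
`T U = exp(iθ) U T`, while `F`, commuting with `T`, keeps it. So `U⁻¹ F ψ` and `ψ` are eigenvectors of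
the unitary `T` with distinct eigenvalues, and such eigenvectors are orthogonal. -/

namespace LinearIsometry

theorem norm_eq_one_of_apply_eq_smul {𝕜 E : Type*} [NormedField 𝕜] [NormedAddCommGroup E]
    [NormedSpace 𝕜 E] (T : E →ₗᵢ[𝕜] E) {a : 𝕜} {v : E} (hv : v ≠ 0) (hTv : T v = a • v) :
    ‖a‖ = 1 := by
  have h : ‖a‖ * ‖v‖ = 1 * ‖v‖ := by rw [← norm_smul, ← hTv, T.norm_map, one_mul]
  exact mul_right_cancel₀ (norm_ne_zero_iff.mpr hv) h

theorem inner_eq_zero_of_apply_eq_smul {𝕜 E : Type*} [RCLike 𝕜] [NormedAddCommGroup E]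
    [InnerProductSpace 𝕜 E] (T : E →ₗᵢ[𝕜] E) {a b : 𝕜} {v w : E}
    (hTv : T v = a • v) (hTw : T w = b • w) (hab : a ≠ b) : inner 𝕜 v w = 0 := by
  by_contra hvw
  have hv : v ≠ 0 := by
    rintro rfl
    exact hvw (inner_zero_left w)
  have h_conj_mul_b : starRingEnd 𝕜 a * b = 1 := by
    have h := T.inner_map_map v w
    rw [hTv, hTw, inner_smul_left, inner_smul_right, ← mul_assoc] at h
    exact mul_right_cancel₀ hvw (h.trans (one_mul _).symm)
  have h_conj_mul_a : starRingEnd 𝕜 a * a = 1 := by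
    rw [RCLike.conj_mul, T.norm_eq_one_of_apply_eq_smul hv hTv]
    simp
  have ha : starRingEnd 𝕜 a ≠ 0 := left_ne_zero_of_mul_eq_one h_conj_mul_a
  exact hab (mul_left_cancel₀ ha (h_conj_mul_a.trans h_conj_mul_b.symm))

end LinearIsometry

theorem LinearEquiv.apply_symm_eq_smul_of_apply_comm_smul {K V : Type*} [Field K]
    [AddCommGroup V] [Module K V] (T : V →ₗ[K] V) (U : V ≃ₗ[K] V) {c μ : K} {y : V}
    (hc : c ≠ 0) (hTU : ∀ x, T (U x) = c • U (T x)) (hTy : T y = μ • y) :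
    T (U.symm y) = (c⁻¹ * μ) • U.symm y := by
  apply U.injective
  have h := hTU (U.symm y)
  rw [U.apply_symm_apply, hTy] at h
  rw [map_smul, U.apply_symm_apply, ← smul_smul, h, smul_smul, inv_mul_cancel₀ hc, one_smul]

/-- Momentum counting: if `T` is unitary with `T ∘ U = exp(iθ)·(U ∘ T)` for a unitary `U`,
`T` commutes with a linear operator `F`, and `ψ ≠ 0` is a `T`-eigenstate, then whenever
`exp(iθ) ≠ 1`, the state `U⁻¹(Fψ)` is orthogonal to `ψ`. -/
theorem flux_insertion_orthogonality
    {H : Type*} [NormedAddCommGroup H] [InnerProductSpace ℂ H]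
    (T U : H ≃ₗᵢ[ℂ] H) (F : H →ₗ[ℂ] H) (θ : ℝ) (lam : ℂ)
    (hTU : ∀ x : H, T (U x) = Complex.exp (Complex.I * (θ : ℂ)) • U (T x))
    (hTF : ∀ x : H, T (F x) = F (T x))
    (ψ : H) (hψ : ψ ≠ 0) (hTψ : T ψ = lam • ψ)
    (hθ : Complex.exp (Complex.I * (θ : ℂ)) ≠ 1) :
    (inner ℂ ψ (U.symm (F ψ)) : ℂ) = 0 := by
  set e := Complex.exp (Complex.I * (θ : ℂ))
  have hTFψ : T (F ψ) = lam • F ψ := by rw [hTF, hTψ, map_smul]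
  have hTUFψ : T (U.symm (F ψ)) = (e⁻¹ * lam) • U.symm (F ψ) :=
    LinearEquiv.apply_symm_eq_smul_of_apply_comm_smul (T : H →ₗ[ℂ] H) U.toLinearEquiv
      (Complex.exp_ne_zero _) hTU hTFψ
  have hlam : lam ≠ 0 := by
    rw [← norm_ne_zero_iff, T.toLinearIsometry.norm_eq_one_of_apply_eq_smul hψ hTψ]
    exact one_ne_zero
  refine T.toLinearIsometry.inner_eq_zero_of_apply_eq_smul hTψ hTUFψ fun h => hθ ?_
  exact inv_eq_one.mp (mul_right_cancel₀ hlam (h.symm.trans (one_mul lam).symm))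
end

section
/- Let H be a complex inner product space, let F and U be unitary operators on H, and let θ be a real number with F ∘ U = exp(iθ) · (U ∘ F). Suppose ψ ∈ H is a nonzero vector with Fψ = cψ for some complex number c, and suppose ⟪ψ, Uψ⟫ ≠ 0. Then exp(iθ) = 1. -/
/-!
Conjugating the twisted commutation relation `F U = e^{iθ} U F` by the eigenvector `ψ` of the
unitary `F` gives `⟪ψ, Uψ⟫ = ⟪Fψ, F Uψ⟫ = |c|² e^{iθ} ⟪ψ, Uψ⟫`, and `|c| = 1` because `F` is an
isometry. So `e^{iθ}` fixes the nonzero number `⟪ψ, Uψ⟫`, i.e. `e^{iθ} = 1`.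
-/

open scoped InnerProductSpace

theorem LinearIsometry.norm_eq_one_of_apply_eq_smul_s7 {𝕜 E : Type*} [NormedField 𝕜]
    [NormedAddCommGroup E] [NormedSpace 𝕜 E] (f : E →ₗᵢ[𝕜] E) {x : E} (hx : x ≠ 0) {c : 𝕜}
    (hfx : f x = c • x) : ‖c‖ = 1 := by
  have h : ‖c‖ * ‖x‖ = 1 * ‖x‖ := by rw [← norm_smul, ← hfx, f.norm_map, one_mul]
  exact mul_right_cancel₀ (norm_ne_zero_iff.mpr hx) h

section TwistedCommutation

variable {𝕜 E : Type*} [RCLike 𝕜] [NormedAddCommGroup E] [InnerProductSpace 𝕜 E]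

theorem inner_smul_smul_of_norm_eq_one {c : 𝕜} (hc : ‖c‖ = 1) (x y : E) :
    ⟪c • x, c • y⟫_𝕜 = ⟪x, y⟫_𝕜 := by
  rw [inner_smul_left, inner_smul_right, ← mul_assoc, RCLike.conj_mul, hc]
  simp

theorem inner_apply_eq_mul_inner_of_twisted_comm (F : E →ₗᵢ[𝕜] E) (U : E →ₗ[𝕜] E) {e : 𝕜}
    (hFU : ∀ x, F (U x) = e • U (F x)) {ψ : E} (hψ : ψ ≠ 0) {c : 𝕜} (hFψ : F ψ = c • ψ) :
    ⟪ψ, U ψ⟫_𝕜 = e * ⟪ψ, U ψ⟫_𝕜 :=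
  calc ⟪ψ, U ψ⟫_𝕜 = ⟪F ψ, F (U ψ)⟫_𝕜 := (F.inner_map_map ψ (U ψ)).symm
    _ = ⟪c • ψ, c • (e • U ψ)⟫_𝕜 := by rw [hFU, hFψ, map_smul, smul_comm]
    _ = e * ⟪ψ, U ψ⟫_𝕜 := by
      rw [inner_smul_smul_of_norm_eq_one (F.norm_eq_one_of_apply_eq_smul_s7 hψ hFψ), inner_smul_right]

end TwistedCommutation

/-- Laughlin quantization on the torus: if unitaries `F`, `U` satisfy
`F ∘ U = exp(iθ)·(U ∘ F)`, `ψ ≠ 0` is an eigenvector of `F`, and the polarization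
expectation value `⟪ψ, Uψ⟫` is nonzero, then `exp(iθ) = 1`. -/
theorem laughlin_quantization
    {H : Type*} [NormedAddCommGroup H] [InnerProductSpace ℂ H]
    (F U : H ≃ₗᵢ[ℂ] H) (θ : ℝ)
    (hFU : ∀ x : H, F (U x) = Complex.exp (Complex.I * (θ : ℂ)) • U (F x))
    (ψ : H) (hψ : ψ ≠ 0) (c : ℂ) (hFψ : F ψ = c • ψ)
    (hz : (inner ℂ ψ (U ψ) : ℂ) ≠ 0) :
    Complex.exp (Complex.I * (θ : ℂ)) = 1 :=
  (mul_eq_right₀ hz).mp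
    (inner_apply_eq_mul_inner_of_twisted_comm F.toLinearIsometry U.toLinearEquiv.toLinearMap
      hFU hψ hFψ).symm
end

section
/- Let H be a complex inner product space, and let F and U be unitary operators on H with F ∘ U = exp(2πi·p̃/q̃) · (U ∘ F), where p̃ and q̃ are coprime integers with q̃ ≥ 1. Let G be a subspace of H with F(G) ⊆ G, and suppose some nonzero ψ ∈ G satisfies Uψ = μψ for a complex number μ. Then the q̃ vectors ψ, Fψ, F²ψ, …, F^{q̃−1}ψ all lie in G, are nonzero, and are pairwise orthogonal; consequently, if G is finite dimensional, dim G ≥ q̃. -/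
/-!
Conjugating `U` by `F` rescales it by `ω = exp(2πi p/q)`, so `F` maps a `U`-eigenvector with
eigenvalue `λ` to one with eigenvalue `ω⁻¹ λ`. Since `ω` is a primitive `q`-th root of unity,
`ψ, Fψ, …, F^{q-1}ψ` are eigenvectors of the unitary `U` for `q` distinct eigenvalues,
hence pairwise orthogonal, hence linearly independent in `G`.
-/

open scoped InnerProductSpace

section EigenvectorsOfIsometries

variable {𝕜 E : Type*} [RCLike 𝕜] [NormedAddCommGroup E] [InnerProductSpace 𝕜 E]

theorem LinearIsometry.norm_eq_one_of_apply_eq_smul_s10 (U : E →ₗᵢ[𝕜] E) {x : E} {a : 𝕜}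
    (hx : U x = a • x) (hx₀ : x ≠ 0) : ‖a‖ = 1 := by
  have h : ‖a‖ * ‖x‖ = 1 * ‖x‖ := by rw [← norm_smul, ← hx, U.norm_map, one_mul]
  exact mul_right_cancel₀ (norm_ne_zero_iff.mpr hx₀) h

theorem LinearIsometry.inner_eq_zero_of_apply_eq_smul_s10 (U : E →ₗᵢ[𝕜] E) {x y : E} {a b : 𝕜}
    (hx : U x = a • x) (hy : U y = b • y) (hx₀ : x ≠ 0) (hab : a ≠ b) : ⟪x, y⟫_𝕜 = 0 := by
  have ha : ‖a‖ = 1 := U.norm_eq_one_of_apply_eq_smul_s10 hx hx₀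
  have hconj_a : starRingEnd 𝕜 a * a = 1 := by
    rw [RCLike.conj_mul, ha]; simp
  have hinner : ⟪x, y⟫_𝕜 = (starRingEnd 𝕜 a * b) * ⟪x, y⟫_𝕜 :=
    calc ⟪x, y⟫_𝕜 = ⟪U x, U y⟫_𝕜 := (U.inner_map_map x y).symm
      _ = _ := by rw [hx, hy, inner_smul_left, inner_smul_right, mul_assoc]
  by_contra h
  have hconj_b : starRingEnd 𝕜 a * b = 1 :=
    (mul_left_eq_self₀.mp hinner.symm).resolve_right h
  have hconj_a₀ : starRingEnd 𝕜 a ≠ 0 := left_ne_zero_of_mul_eq_one hconj_a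
  exact hab (mul_left_cancel₀ hconj_a₀ (hconj_a.trans hconj_b.symm))

end EigenvectorsOfIsometries

section TwistedCommutation

variable {R E : Type*} [SeminormedAddCommGroup E]

theorem LinearIsometryEquiv.coe_pow [Semiring R] [Module R E] (F : E ≃ₗᵢ[R] E) (n : ℕ) :
    ⇑(F ^ n) = F^[n] :=
  hom_coe_pow _ rfl (fun _ _ ↦ rfl) _ _

theorem LinearIsometryEquiv.pow_apply_apply_of_twisted_comm [Semiring R] [Module R E]
    {F U : E ≃ₗᵢ[R] E} {ω : R} (hFU : ∀ x, F (U x) = ω • U (F x)) (m : ℕ) (x : E) :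
    (F ^ m) (U x) = ω ^ m • U ((F ^ m) x) := by
  induction m with
  | zero => simp
  | succ m ih =>
    rw [pow_succ', coe_mul, Function.comp_apply, Function.comp_apply, ih, map_smul, hFU,
      smul_smul, pow_succ]

theorem LinearIsometryEquiv.apply_pow_apply_of_twisted_comm [DivisionRing R] [Module R E]
    {F U : E ≃ₗᵢ[R] E} {ω : R} (hFU : ∀ x, F (U x) = ω • U (F x)) (hω : ω ≠ 0)
    {x : E} {μ : R} (hx : U x = μ • x) (m : ℕ) :
    U ((F ^ m) x) = ((ω ^ m)⁻¹ * μ) • (F ^ m) x := by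
  have h := pow_apply_apply_of_twisted_comm hFU m x
  rw [hx, map_smul] at h
  rw [mul_smul, h, smul_smul, inv_mul_cancel₀ (pow_ne_zero m hω), one_smul]

end TwistedCommutation

theorem Submodule.le_finrank_of_inner_eq_zero {𝕜 E : Type*} [RCLike 𝕜] [NormedAddCommGroup E]
    [InnerProductSpace 𝕜 E] {G : Submodule 𝕜 E} [FiniteDimensional 𝕜 G] {v : ℕ → E} {q : ℕ}
    (hmem : ∀ m < q, v m ∈ G) (hne : ∀ m < q, v m ≠ 0)
    (horth : ∀ m n, m < n → n < q → ⟪v m, v n⟫_𝕜 = 0) : q ≤ Module.finrank 𝕜 G := by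
  let w : Fin q → G := fun i ↦ ⟨v i, hmem i i.isLt⟩
  have hw : LinearIndependent 𝕜 w := by
    refine linearIndependent_of_ne_zero_of_inner_eq_zero
      (fun i ↦ by simpa [w] using hne i i.isLt) fun i j hij ↦ ?_
    change ⟪v i, v j⟫_𝕜 = 0
    rcases lt_or_gt_of_ne (Fin.val_ne_of_ne hij) with h | h
    · exact horth i j h j.isLt
    · rw [← inner_conj_symm, horth j i h i.isLt, map_zero]
  simpa using hw.fintype_card_le_finrank

/-- Tao–Wu degeneracy: let `F`, `U` be unitaries with
`F ∘ U = exp(2πi·p̃/q̃)·(U ∘ F)` for coprime integers `p̃`, `q̃` with `q̃ ≥ 1`, let `G` be an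
`F`-invariant subspace, and let `ψ ∈ G` be a nonzero `U`-eigenvector. Then the `q̃` vectors
`ψ, Fψ, …, F^{q̃−1}ψ` lie in `G`, are nonzero and pairwise orthogonal; hence if `G` is
finite dimensional, `dim G ≥ q̃`. -/
theorem tao_wu_ground_state_degeneracy
    {H : Type*} [NormedAddCommGroup H] [InnerProductSpace ℂ H]
    (F U : H ≃ₗᵢ[ℂ] H) (p : ℤ) (q : ℕ) (hq : 1 ≤ q) (hcop : Int.gcd p (q : ℤ) = 1)
    (hFU : ∀ x : H, F (U x) =
      Complex.exp (2 * Real.pi * Complex.I * ((p : ℂ) / (q : ℂ))) • U (F x))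
    (G : Submodule ℂ H) (hFG : ∀ x ∈ G, F x ∈ G)
    (ψ : H) (hψG : ψ ∈ G) (hψ : ψ ≠ 0) (μ : ℂ) (hUψ : U ψ = μ • ψ) :
    (∀ m : ℕ, m < q → (F ^ m) ψ ∈ G ∧ (F ^ m) ψ ≠ 0) ∧
    (∀ m n : ℕ, m < n → n < q → (inner ℂ ((F ^ m) ψ) ((F ^ n) ψ) : ℂ) = 0) ∧
    (FiniteDimensional ℂ G → q ≤ Module.finrank ℂ G) := by
  set ω := Complex.exp (2 * Real.pi * Complex.I * ((p : ℂ) / (q : ℂ)))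
  have hω : IsPrimitiveRoot ω q := Complex.isPrimitiveRoot_exp_of_isCoprime p q (by omega)
    (Int.isCoprime_iff_gcd_eq_one.mpr hcop)
  have hμ : μ ≠ 0 := by
    rintro rfl
    simpa [hψ] using U.toLinearIsometry.norm_eq_one_of_apply_eq_smul_s10 hUψ hψ
  have hmem (m : ℕ) : (F ^ m) ψ ∈ G := by
    rw [LinearIsometryEquiv.coe_pow]
    exact Set.MapsTo.iterate hFG m hψG
  have hne (m : ℕ) : (F ^ m) ψ ≠ 0 := (F ^ m).map_ne_zero_iff.mpr hψ
  have heig := LinearIsometryEquiv.apply_pow_apply_of_twisted_comm hFU (hω.ne_zero (by omega)) hUψ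
  have horth (m n : ℕ) (hmn : m < n) (hn : n < q) : ⟪(F ^ m) ψ, (F ^ n) ψ⟫_ℂ = 0 := by
    refine U.toLinearIsometry.inner_eq_zero_of_apply_eq_smul_s10 (heig m) (heig n) (hne m) ?_
    intro h
    have := hω.pow_inj (hmn.trans hn) hn (inv_injective (mul_right_cancel₀ hμ h))
    omega
  exact ⟨fun m _ ↦ ⟨hmem m, hne m⟩, horth, fun _ ↦
    Submodule.le_finrank_of_inner_eq_zero (fun m _ ↦ hmem m) (fun m _ ↦ hne m) horth⟩
end

section
/- Let V be a nonzero finite-dimensional complex inner product space, and let A and B be unitary operators on V satisfying A ∘ B = ω · (B ∘ A), where ω = exp(2πi·p/q) with p and q coprime integers and q ≥ 1. Then q divides dim V. -/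
/-! Taking determinants of `A ∘ B = ω • (B ∘ A)` gives
`det A * det B = ω ^ dim V * det B * det A`, so `ω ^ dim V = 1`; since `ω` is a primitive
`q`-th root of unity, `q ∣ dim V`. -/

theorem LinearEquiv.pow_finrank_eq_one_of_apply_apply_eq_smul {R M : Type*} [CommRing R]
    [AddCommGroup M] [Module R M] [Module.Free R M] (f g : M ≃ₗ[R] M) (c : R)
    (h : ∀ x, f (g x) = c • g (f x)) : c ^ Module.finrank R M = 1 := by
  have hcomp : f.toLinearMap ∘ₗ g.toLinearMap = c • (g.toLinearMap ∘ₗ f.toLinearMap) :=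
    LinearMap.ext fun x => h x
  have hdet : LinearMap.det f.toLinearMap * LinearMap.det g.toLinearMap =
      c ^ Module.finrank R M * (LinearMap.det g.toLinearMap * LinearMap.det f.toLinearMap) := by
    rw [← LinearMap.det_comp, hcomp, LinearMap.det_smul, LinearMap.det_comp]
  have hunit : IsUnit (LinearMap.det g.toLinearMap * LinearMap.det f.toLinearMap) :=
    g.isUnit_det'.mul f.isUnit_det'
  exact hunit.mul_left_inj.mp (by rw [one_mul, ← hdet, mul_comm])

theorem magnetic_translation_forces_degeneracy_general
    {V : Type*} [NormedAddCommGroup V] [InnerProductSpace ℂ V]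
    [FiniteDimensional ℂ V]
    (A B : V ≃ₗᵢ[ℂ] V) (p : ℤ) (q : ℕ) (hq : 1 ≤ q) (hcop : Int.gcd p (q : ℤ) = 1)
    (hAB : ∀ x : V, A (B x) =
      Complex.exp (2 * Real.pi * Complex.I * ((p : ℂ) / (q : ℂ))) • B (A x)) :
    q ∣ Module.finrank ℂ V := by
  have hprim := Complex.isPrimitiveRoot_exp_of_isCoprime p q (by omega)
    (Int.isCoprime_iff_gcd_eq_one.mpr hcop)
  exact hprim.dvd_of_pow_eq_one _
    (A.toLinearEquiv.pow_finrank_eq_one_of_apply_apply_eq_smul B.toLinearEquiv _ hAB)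

/-- Magnetic translation algebra forces degeneracy: if `A`, `B` are unitary operators on a
nonzero finite-dimensional complex inner product space `V` with `A ∘ B = ω·(B ∘ A)`, where
`ω = exp(2πi·p/q)` for coprime integers `p`, `q` with `q ≥ 1`, then `q` divides `dim V`. -/
theorem magnetic_translation_forces_degeneracy
    {V : Type*} [NormedAddCommGroup V] [InnerProductSpace ℂ V]
    [FiniteDimensional ℂ V] [Nontrivial V]
    (A B : V ≃ₗᵢ[ℂ] V) (p : ℤ) (q : ℕ) (hq : 1 ≤ q) (hcop : Int.gcd p (q : ℤ) = 1)
    (hAB : ∀ x : V, A (B x) =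
      Complex.exp (2 * Real.pi * Complex.I * ((p : ℂ) / (q : ℂ))) • B (A x)) :
    q ∣ Module.finrank ℂ V :=
  magnetic_translation_forces_degeneracy_general A B p q hq hcop hAB
end
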